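/- Let x = (θ1,θ2,κ0,κ1,κ∞,p1,p2,q1,q2) be a (T2,T3) Garnier lattice (so θ2(l,m) = θ2(0,0)+l and κ0(l,m) = κ0(0,0)+m for all (l,m)). Then: (a) if θ2(l,m) ≠ 0 for all (l,m), the function u(l,m) = p2(l,m)·q2(l,m)/θ2(l,m) − 1 satisfies the discrete Volterra equation in product form; (b) if κ0(l,m) ≠ 0 for all (l,m), the function u(l,m) = p2(m,l)·( t1·q2(m,l) + t2·q1(m,l) − t1·t2 ) / ( κ0(m,l)·t1 ) − 1 satisfies the discrete Volterra equation in product form. -/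

import Mathlib

/-- The data of the Garnier system in two variables at one lattice site:
parameters `th1, th2, k0, k1, kinf` (i.e. θ₁, θ₂, κ₀, κ₁, κ∞) and variables
`p1, p2, q1, q2`. -/
structure GarnierState where
  th1 : ℂ
  th2 : ℂ
  k0 : ℂ
  k1 : ℂ
  kinf : ℂ
  p1 : ℂ
  p2 : ℂ
  q1 : ℂ
  q2 : ℂ

namespace Garnier

noncomputable def gam (x : GarnierState) : ℂ :=
  -(x.th1 + x.th2 + x.k0 + x.k1 + x.kinf - 1) / 2

def f1 (x : GarnierState) : ℂ := x.p1 * x.q1 - x.th1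

def f2 (x : GarnierState) : ℂ := x.p2 * x.q2 - x.th2

noncomputable def f3 (x : GarnierState) : ℂ := x.p1 * x.q1 + x.p2 * x.q2 + gam x

def f4 (t1 t2 : ℂ) (x : GarnierState) : ℂ :=
  x.q1 * x.q2 - (x.q1 - t1) * (x.q2 - t2)

noncomputable def f5 (t1 t2 : ℂ) (x : GarnierState) : ℂ :=
  (f3 x * f4 t1 t2 x - x.k0 * t1 * t2) *
    (f3 x * f4 t1 t2 x + x.kinf * f4 t1 t2 x - x.k0 * t1 * t2)

/-- The Bäcklund transformation `T1` of the Garnier system in two variables, as a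
step relation between states (including nonvanishing of all denominators
occurring in the step formulas). -/
noncomputable def T1Step (t1 t2 : ℂ) (x y : GarnierState) : Prop :=
  y.th1 = x.th1 + 1 ∧ y.th2 = x.th2 ∧ y.k0 = x.k0 ∧ y.k1 = 1 - x.k1 ∧
  y.kinf = x.kinf ∧
  x.q1 ≠ 0 ∧ f1 x ≠ 0 ∧ t1 * f1 x - t2 * x.p2 * x.q1 ≠ 0 ∧ y.p1 ≠ 0 ∧
  y.p1 = (x.q1 * f3 x - t1 * f1 x) * (x.q1 * f3 x - t1 * f1 x + x.kinf * x.q1) /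
    ((1 - t1) * t1 * x.q1 * f1 x) ∧
  y.p2 = t1 * (f1 x - x.p2 * x.q1) * y.p1 / (t1 * f1 x - t2 * x.p2 * x.q1) ∧
  y.q2 = (t2 * x.p2 * x.q1 - t1 * f1 x) * (t1 * x.q2 * f1 x - t2 * x.q1 * f2 x) /
    ((t1 - t2) * t1 * y.p1 * x.q1 * f1 x) ∧
  y.q1 = (x.k0 * t2 * x.q1 - f1 x * f4 t1 t2 x) / (t2 * y.p1 * x.q1)
    - t1 * y.q2 / t2 + t1

/-- The Bäcklund transformation `T2` of the Garnier system in two variables, as a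
step relation between states (including nonvanishing of all denominators
occurring in the step formulas). -/
noncomputable def T2Step (t1 t2 : ℂ) (x y : GarnierState) : Prop :=
  y.th1 = x.th1 ∧ y.th2 = x.th2 + 1 ∧ y.k0 = x.k0 ∧ y.k1 = 1 - x.k1 ∧
  y.kinf = x.kinf ∧
  x.q2 ≠ 0 ∧ f2 x ≠ 0 ∧ t2 * f2 x - t1 * x.p1 * x.q2 ≠ 0 ∧ y.p2 ≠ 0 ∧
  y.p2 = (x.q2 * f3 x - t2 * f2 x) * (x.q2 * f3 x - t2 * f2 x + x.kinf * x.q2) /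
    ((1 - t2) * t2 * x.q2 * f2 x) ∧
  y.p1 = t2 * (f2 x - x.p1 * x.q2) * y.p2 / (t2 * f2 x - t1 * x.p1 * x.q2) ∧
  y.q1 = (t1 * x.p1 * x.q2 - t2 * f2 x) * (t1 * x.q2 * f1 x - t2 * x.q1 * f2 x) /
    ((t1 - t2) * t2 * y.p2 * x.q2 * f2 x) ∧
  y.q2 = (x.k0 * t1 * x.q2 - f2 x * f4 t1 t2 x) / (t1 * y.p2 * x.q2)
    - t2 * y.q1 / t1 + t2

/-- The Bäcklund transformation `T3` of the Garnier system in two variables, as a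
step relation between states (including nonvanishing of all denominators
occurring in the step formulas). -/
noncomputable def T3Step (t1 t2 : ℂ) (x y : GarnierState) : Prop :=
  y.th1 = x.th1 ∧ y.th2 = x.th2 ∧ y.k0 = x.k0 + 1 ∧ y.k1 = 1 - x.k1 ∧
  y.kinf = x.kinf ∧
  f4 t1 t2 x ≠ 0 ∧ x.k0 * t2 - x.p1 * f4 t1 t2 x ≠ 0 ∧
  x.k0 * t1 - x.p2 * f4 t1 t2 x ≠ 0 ∧ f5 t1 t2 x ≠ 0 ∧
  y.p1 = f5 t1 t2 x / (t1 * (x.k0 * t2 - x.p1 * f4 t1 t2 x) * f4 t1 t2 x) ∧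
  y.p2 = f5 t1 t2 x / (t2 * (x.k0 * t1 - x.p2 * f4 t1 t2 x) * f4 t1 t2 x) ∧
  y.q1 = t1 * (x.k0 * t2 - x.p1 * f4 t1 t2 x) * (x.k0 * t2 * x.q1 - f1 x * f4 t1 t2 x) /
    f5 t1 t2 x ∧
  y.q2 = t2 * (x.k0 * t1 - x.p2 * f4 t1 t2 x) * (x.k0 * t1 * x.q2 - f2 x * f4 t1 t2 x) /
    f5 t1 t2 x

end Garnier

/-!
Write `b(x) = p₂ f₄(x)`, where `f₄ = t₁ q₂ + t₂ q₁ - t₁ t₂`. Clearing denominators in the step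
formulas, a `T2` step `x ↦ y` gives `f₂(x) f₄(x) = q₂(x) (κ₀ t₁ - b(y))` and a `T3` step
`x ↦ z` gives `f₂(z) f₄(x) = q₂(x) (κ₀ t₁ - b(x))`; together they give
`p₂(z) q₂(z) f₄(x) = q₂(x) b(y)`. Since `θ₂` moves only along `T2` and `κ₀` only along `T3`,
in (a) `u = f₂/θ₂`, `1 + u = p₂ q₂/θ₂`, and in (b) `u = -(κ₀ t₁ - b)/(κ₀ t₁)`, `1 + u = b/(κ₀ t₁)`.
On an elementary square the relations above write these numerators at the four corners in
terms of common factors, which cancel in the Volterra equation.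
-/

def DVolterra (u : ℤ → ℤ → ℂ) : Prop :=
  ∀ l m : ℤ, u (l+1) (m+1) * (1 + u l (m+1)) = u l m * (1 + u (l+1) m)

namespace Garnier

variable {t1 t2 : ℂ} {x y z w : GarnierState}

lemma f4_eq (t1 t2 : ℂ) (x : GarnierState) :
    f4 t1 t2 x = t1 * x.q2 + t2 * x.q1 - t1 * t2 := by
  unfold f4; ring

lemma T2Step.th2_eq (h : T2Step t1 t2 x y) : y.th2 = x.th2 + 1 := h.2.1

lemma T2Step.k0_eq (h : T2Step t1 t2 x y) : y.k0 = x.k0 := h.2.2.1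

lemma T2Step.q2_ne_zero (h : T2Step t1 t2 x y) : x.q2 ≠ 0 := h.2.2.2.2.2.1

lemma T3Step.th2_eq (h : T3Step t1 t2 x z) : z.th2 = x.th2 := h.2.1

lemma T3Step.k0_eq (h : T3Step t1 t2 x z) : z.k0 = x.k0 + 1 := h.2.2.1

lemma T3Step.f4_ne_zero (h : T3Step t1 t2 x z) : f4 t1 t2 x ≠ 0 := h.2.2.2.2.2.1

lemma T2Step.f2_mul_f4 (ht1 : t1 ≠ 0) (h : T2Step t1 t2 x y) :
    f2 x * f4 t1 t2 x = x.q2 * (x.k0 * t1 - y.p2 * f4 t1 t2 y) := by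
  obtain ⟨-, -, -, -, -, hq2, -, -, hp2, -, -, -, hq2'⟩ := h
  rw [f4_eq t1 t2 y, hq2']
  field_simp
  ring

lemma T3Step.p2_mul_q2_mul_f4 (ht2 : t2 ≠ 0) (h : T3Step t1 t2 x z) :
    z.p2 * z.q2 * f4 t1 t2 x = x.k0 * t1 * x.q2 - f2 x * f4 t1 t2 x := by
  obtain ⟨-, -, -, -, -, hf4, -, hd, hf5, -, hp2, -, hq2⟩ := h
  rw [hp2, hq2]
  field_simp

lemma T3Step.f2_mul_f4 (ht2 : t2 ≠ 0) (h : T3Step t1 t2 x z) :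
    f2 z * f4 t1 t2 x = x.q2 * (x.k0 * t1 - x.p2 * f4 t1 t2 x) := by
  have key := h.p2_mul_q2_mul_f4 ht2
  unfold f2 at key ⊢
  rw [h.th2_eq]
  linear_combination key

lemma p2_mul_q2_mul_f4_of_T2Step_of_T3Step (ht1 : t1 ≠ 0) (ht2 : t2 ≠ 0)
    (hy : T2Step t1 t2 x y) (hz : T3Step t1 t2 x z) :
    z.p2 * z.q2 * f4 t1 t2 x = x.q2 * (y.p2 * f4 t1 t2 y) := by
  linear_combination hz.p2_mul_q2_mul_f4 ht2 - hy.f2_mul_f4 ht1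

lemma f2_mul_p2_mul_q2_of_square (ht1 : t1 ≠ 0) (ht2 : t2 ≠ 0)
    (hy : T2Step t1 t2 x y) (hz : T3Step t1 t2 x z) (hw : T3Step t1 t2 y w) :
    f2 w * (z.p2 * z.q2) = f2 x * (y.p2 * y.q2) := by
  have hwy := hw.f2_mul_f4 ht2
  rw [hy.k0_eq] at hwy
  refine mul_right_cancel₀ (mul_ne_zero hz.f4_ne_zero hw.f4_ne_zero) ?_
  linear_combination
    (z.p2 * z.q2 * f4 t1 t2 x) * hwy
      + (y.q2 * (x.k0 * t1 - y.p2 * f4 t1 t2 y)) *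
          p2_mul_q2_mul_f4_of_T2Step_of_T3Step ht1 ht2 hy hz
      - (y.p2 * f4 t1 t2 y * y.q2) * hy.f2_mul_f4 ht1

lemma p2_mul_f4_of_square (ht1 : t1 ≠ 0) (ht2 : t2 ≠ 0)
    (hy : T2Step t1 t2 x y) (hz : T3Step t1 t2 x z) (hw : T2Step t1 t2 z w) :
    (z.k0 * t1 - w.p2 * f4 t1 t2 w) * (y.p2 * f4 t1 t2 y)
      = (x.k0 * t1 - x.p2 * f4 t1 t2 x) * (z.p2 * f4 t1 t2 z) := by
  refine mul_right_cancel₀ (mul_ne_zero hy.q2_ne_zero hw.q2_ne_zero) ?_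
  linear_combination
    -(y.p2 * f4 t1 t2 y * x.q2) * hw.f2_mul_f4 ht1
      - (f2 z * f4 t1 t2 z) * p2_mul_q2_mul_f4_of_T2Step_of_T3Step ht1 ht2 hy hz
      + (z.p2 * f4 t1 t2 z * z.q2) * hz.f2_mul_f4 ht2

variable {x : ℤ → ℤ → GarnierState}

theorem dVolterra_p2_mul_q2_div_th2 (ht1 : t1 ≠ 0) (ht2 : t2 ≠ 0)
    (hT2 : ∀ l m : ℤ, T2Step t1 t2 (x l m) (x (l+1) m))
    (hT3 : ∀ l m : ℤ, T3Step t1 t2 (x l m) (x l (m+1)))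
    (hth : ∀ l m : ℤ, (x l m).th2 ≠ 0) :
    DVolterra fun l m => (x l m).p2 * (x l m).q2 / (x l m).th2 - 1 := by
  intro l m
  have key := f2_mul_p2_mul_q2_of_square ht1 ht2 (hT2 l m) (hT3 l m) (hT3 (l+1) m)
  have hthx := hth l m
  have hthx1 : (x l m).th2 + 1 ≠ 0 := (hT2 l m).th2_eq ▸ hth (l+1) m
  unfold f2 at key
  simp only [(hT2 l m).th2_eq, (hT3 l m).th2_eq, (hT3 (l+1) m).th2_eq] at key ⊢
  field_simp
  linear_combination key

theorem dVolterra_p2_mul_f4_div_k0_transpose (ht1 : t1 ≠ 0) (ht2 : t2 ≠ 0)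
    (hT2 : ∀ l m : ℤ, T2Step t1 t2 (x l m) (x (l+1) m))
    (hT3 : ∀ l m : ℤ, T3Step t1 t2 (x l m) (x l (m+1)))
    (hk0 : ∀ l m : ℤ, (x l m).k0 ≠ 0) :
    DVolterra fun l m => (x m l).p2 * f4 t1 t2 (x m l) / ((x m l).k0 * t1) - 1 := by
  intro l m
  have key := p2_mul_f4_of_square ht1 ht2 (hT2 m l) (hT3 m l) (hT2 m (l+1))
  have hkx := hk0 m l
  have hkx1 : (x m l).k0 + 1 ≠ 0 := (hT3 m l).k0_eq ▸ hk0 m (l+1)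
  simp only [(hT2 m l).k0_eq, (hT3 m l).k0_eq, (hT2 m (l+1)).k0_eq] at key ⊢
  field_simp
  linear_combination -key

end Garnier

theorem dVolterra_solutions_from_Garnier_T2T3_lattice_general
    (t1 t2 : ℂ) (ht10 : t1 ≠ 0) (ht20 : t2 ≠ 0)
    (x : ℤ → ℤ → GarnierState)
    (hT2 : ∀ l m : ℤ, Garnier.T2Step t1 t2 (x l m) (x (l+1) m))
    (hT3 : ∀ l m : ℤ, Garnier.T3Step t1 t2 (x l m) (x l (m+1))) :
    ((∀ l m : ℤ, (x l m).th2 ≠ 0) →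
      ∀ u : ℤ → ℤ → ℂ,
        (∀ l m : ℤ, u l m = (x l m).p2 * (x l m).q2 / (x l m).th2 - 1) →
        ∀ l m : ℤ, u (l+1) (m+1) * (1 + u l (m+1)) = u l m * (1 + u (l+1) m)) ∧
    ((∀ l m : ℤ, (x l m).k0 ≠ 0) →
      ∀ u : ℤ → ℤ → ℂ,
        (∀ l m : ℤ, u l m =
          (x m l).p2 * (t1 * (x m l).q2 + t2 * (x m l).q1 - t1 * t2) /
            ((x m l).k0 * t1) - 1) →
        ∀ l m : ℤ, u (l+1) (m+1) * (1 + u l (m+1)) = u l m * (1 + u (l+1) m)) := by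
  refine ⟨fun hth u hu => ?_, fun hk0 u hu => ?_⟩
  · obtain rfl : u = _ := funext₂ hu
    exact Garnier.dVolterra_p2_mul_q2_div_th2 ht10 ht20 hT2 hT3 hth
  · simp only [← Garnier.f4_eq] at hu
    obtain rfl : u = _ := funext₂ hu
    exact Garnier.dVolterra_p2_mul_f4_div_k0_transpose ht10 ht20 hT2 hT3 hk0

/-- Special solutions of the discrete Volterra equation (product form) from a
(T2,T3) Garnier lattice. -/
theorem dVolterra_solutions_from_Garnier_T2T3_lattice
    (t1 t2 : ℂ) (ht10 : t1 ≠ 0) (ht11 : t1 ≠ 1) (ht20 : t2 ≠ 0) (ht21 : t2 ≠ 1)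
    (ht12 : t1 ≠ t2)
    (x : ℤ → ℤ → GarnierState)
    (hT2 : ∀ l m : ℤ, Garnier.T2Step t1 t2 (x l m) (x (l+1) m))
    (hT3 : ∀ l m : ℤ, Garnier.T3Step t1 t2 (x l m) (x l (m+1))) :
    ((∀ l m : ℤ, (x l m).th2 ≠ 0) →
      ∀ u : ℤ → ℤ → ℂ,
        (∀ l m : ℤ, u l m = (x l m).p2 * (x l m).q2 / (x l m).th2 - 1) →
        ∀ l m : ℤ, u (l+1) (m+1) * (1 + u l (m+1)) = u l m * (1 + u (l+1) m)) ∧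
    ((∀ l m : ℤ, (x l m).k0 ≠ 0) →
      ∀ u : ℤ → ℤ → ℂ,
        (∀ l m : ℤ, u l m =
          (x m l).p2 * (t1 * (x m l).q2 + t2 * (x m l).q1 - t1 * t2) /
            ((x m l).k0 * t1) - 1) →
        ∀ l m : ℤ, u (l+1) (m+1) * (1 + u l (m+1)) = u l m * (1 + u (l+1) m)) :=
  dVolterra_solutions_from_Garnier_T2T3_lattice_general t1 t2 ht10 ht20 x hT2 hT3
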